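/- arXiv:1212.1883 — 5 statements merged into one kernel-verified Lean document; each statement's English description precedes it below -/
import Mathlib

section
/- Every tournament with an arbitrary arc-weighting contains a weakly expanding (Seymour) vertex, i.e., there exists a vertex v with δ_v = β_v − α_v ≥ 0. -/
open Finset

/-- The first out-neighborhood of `v`: all `u` with `v → u`. -/
def firstNbhd {V : Type*} [Fintype V] (adj : V → V → Prop) [DecidableRel adj] (v : V) :
    Finset V :=
  Finset.univ.filter (fun u => adj v u)

/-- The second out-neighborhood of `v`: all `u ≠ v` with `¬ v → u` and `v → x → u` for some `x`. -/
def secondNbhd {V : Type*} [Fintype V] [DecidableEq V] (adj : V → V → Prop)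
    [DecidableRel adj] (v : V) : Finset V :=
  Finset.univ.filter (fun u => u ≠ v ∧ ¬ adj v u ∧ ∃ x, adj v x ∧ adj x u)

/-- First neighborhood weight `α_v = Σ_{u ∈ N1+(v)} w(vu)`. -/
def alphaW {V : Type*} [Fintype V] (adj : V → V → Prop) [DecidableRel adj]
    (w : V → V → ℝ) (v : V) : ℝ :=
  ∑ u ∈ firstNbhd adj v, w v u

/-- `β_v(s) = max({0} ∪ {w(us) − w(vs) : v → u and u → s})`. -/
noncomputable def betaS {V : Type*} [Fintype V] (adj : V → V → Prop) [DecidableRel adj]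
    (w : V → V → ℝ) (v s : V) : ℝ :=
  (insert (0 : ℝ)
    ((Finset.univ.filter (fun u => adj v u ∧ adj u s)).image (fun u => w u s - w v s))).max'
    (Finset.insert_nonempty _ _)

/-- Second neighborhood weight `β_v = Σ_{s ∈ V} β_v(s)`. -/
noncomputable def betaW {V : Type*} [Fintype V] (adj : V → V → Prop) [DecidableRel adj]
    (w : V → V → ℝ) (v : V) : ℝ :=
  ∑ s, betaS adj w v s

/-- Neighborhood weight difference `δ_v = β_v − α_v`. -/
noncomputable def deltaW {V : Type*} [Fintype V] (adj : V → V → Prop) [DecidableRel adj]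
    (w : V → V → ℝ) (v : V) : ℝ :=
  betaW adj w v - alphaW adj w v

/-!
By von Neumann's minimax theorem for the skew-symmetric tournament game there is a probability
distribution `p` on the vertices with `p(N⁻(v)) ≤ p(N⁺(v))` for every `v`. For such `p`, if `S`
consists of in-neighbours of a single vertex, then `S ∪ N⁻(S)` has at least twice the mass of `S`:
every vertex outside it is beaten by all of `S`, and comparing the `p ⊗ p`-mass of the arcs across
the cut bounds `p(S)` by the mass of `N⁻(S) \ S` (and the case of a null complement follows from
`p(N⁻(s)) ≤ 1/2`). Applied to the superlevel sets of `w(·, s)` and integrated over the level, this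
gives `2 ∑ₓ p(x) w(x, s) ≤ ∑ᵥ p(v) max_{y ∈ N⁺[v]} w(y, s)`. Summing over `s`, the `p`-average of
`2 α_v` is at most that of `∑ₛ max_{y ∈ N⁺[v]} w(y, s) ≤ α_v + β_v`, so some `v` has `α_v ≤ β_v`.
-/

lemma eq_max_sub_add_ite {r c : ℝ} (hr : r = 0 ∨ c ≤ r) (hc : 0 < c) :
    r = max (r - c) 0 + if 0 < r then c else 0 := by
  rcases hr with rfl | hr
  · simp [hc.le]
  · rw [max_eq_left (by linarith), if_pos (by linarith)]; ring

lemma sum_mul_eq_sum_mul_max_sub_add {X : Type*} [Fintype X] (a f : X → ℝ) {c : ℝ} (hc : 0 < c)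
    (hf : ∀ x, f x = 0 ∨ c ≤ f x) :
    ∑ x, a x * f x = ∑ x, a x * max (f x - c) 0 + c * ∑ x with 0 < f x, a x := by
  rw [sum_filter, mul_sum, ← sum_add_distrib]
  refine sum_congr rfl fun x _ => ?_
  conv_lhs => rw [eq_max_sub_add_ite (hf x) hc]
  split_ifs <;> ring

lemma filter_lt_max_sub {X : Type*} [Fintype X] (f : X → ℝ) {c t : ℝ} (ht : 0 ≤ t) :
    univ.filter (fun x => t < max (f x - c) 0) = univ.filter (fun x => t + c < f x) := by
  ext x
  simp only [mem_filter, mem_univ, true_and, lt_max_iff, not_lt.2 ht, or_false]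
  constructor <;> intro h <;> linarith

lemma card_filter_lt_le_card_filter_pos {X : Type*} [Fintype X] (f : X → ℝ) {c : ℝ}
    (hc : 0 < c) : #{x | c < f x} ≤ #{x | 0 < f x} :=
  card_le_card (monotone_filter_right _ fun _ _ h => hc.trans h)

lemma card_filter_lt_lt_card_filter_pos {X : Type*} [Fintype X] {f : X → ℝ} {c : ℝ}
    (hc : 0 < c) {x₀ : X} (hx₀ : f x₀ = c) : #{x | c < f x} < #{x | 0 < f x} :=
  card_lt_card <| (ssubset_iff_of_subset (monotone_filter_right _ fun _ _ h => hc.trans h)).2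
    ⟨x₀, by simp [hx₀, hc]⟩

/-- Discrete layer-cake comparison: both sides are the integrals over `t ≥ 0` of the
superlevel sums. The induction peels off the smallest positive level of `f` and `g`. -/
theorem sum_mul_le_sum_mul_of_sum_superlevel_le {X Y : Type*} [Fintype X] [Fintype Y]
    {a : X → ℝ} {b : Y → ℝ} {f : X → ℝ} {g : Y → ℝ} (hf : ∀ x, 0 ≤ f x) (hg : ∀ y, 0 ≤ g y)
    (h : ∀ t, 0 ≤ t → ∑ x with t < f x, a x ≤ ∑ y with t < g y, b y) :
    ∑ x, a x * f x ≤ ∑ y, b y * g y := by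
  induction hn : #{x | 0 < f x} + #{y | 0 < g y} using Nat.strong_induction_on
    generalizing f g with
  | _ n ih =>
  set P : Finset ℝ := (univ.image f ∪ univ.image g).filter (0 < ·)
  rcases P.eq_empty_or_nonempty with hP | hPne
  · simp only [P, filter_eq_empty_iff, mem_union, mem_image, mem_univ, true_and, not_lt] at hP
    have hf0 (x : X) : f x = 0 := le_antisymm (hP (Or.inl ⟨x, rfl⟩)) (hf x)
    have hg0 (y : Y) : g y = 0 := le_antisymm (hP (Or.inr ⟨y, rfl⟩)) (hg y)
    simp [hf0, hg0]
  set c := P.min' hPne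
  have hc : 0 < c := (mem_filter.1 (P.min'_mem hPne)).2
  have hfc : ∀ x, f x = 0 ∨ c ≤ f x := fun x =>
    (hf x).eq_or_lt.imp Eq.symm fun hx => P.min'_le _ (by simp [P, hx])
  have hgc : ∀ y, g y = 0 ∨ c ≤ g y := fun y =>
    (hg y).eq_or_lt.imp Eq.symm fun hy => P.min'_le _ (by simp [P, hy])
  have hlt : #{x | c < f x} + #{y | c < g y} < n := by
    have hf' := card_filter_lt_le_card_filter_pos f hc
    have hg' := card_filter_lt_le_card_filter_pos g hc
    obtain ⟨x₀, hx₀⟩ | ⟨y₀, hy₀⟩ : (∃ x, f x = c) ∨ ∃ y, g y = c := by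
      simpa [P] using P.min'_mem hPne
    · have := card_filter_lt_lt_card_filter_pos hc hx₀; omega
    · have := card_filter_lt_lt_card_filter_pos hc hy₀; omega
  have ih' := ih _ hlt (f := fun x => max (f x - c) 0) (g := fun y => max (g y - c) 0)
    (fun _ => le_max_right _ _) (fun _ => le_max_right _ _)
    (fun t ht => by
      rw [filter_lt_max_sub f ht, filter_lt_max_sub g ht]
      exact h _ (by linarith))
    (by rw [filter_lt_max_sub f le_rfl, filter_lt_max_sub g le_rfl, zero_add])
  rw [sum_mul_eq_sum_mul_max_sub_add a f hc hfc, sum_mul_eq_sum_mul_max_sub_add b g hc hgc]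
  have := mul_le_mul_of_nonneg_left (h 0 le_rfl) hc.le
  linarith

theorem exists_mem_stdSimplex_forall_sum_mul_nonneg {V : Type*} [Fintype V] [Nonempty V]
    (g : V → V → ℝ) (hg : ∀ u v, g u v = -g v u) :
    ∃ p ∈ stdSimplex ℝ V, ∀ v, 0 ≤ ∑ u, g v u * p u := by
  classical
  set B := Matrix.toBilin' (Matrix.of g)
  have hB : ∀ x y, B x y = ∑ i, ∑ j, x i * g i j * y j := fun x y => Matrix.toBilin'_apply _ x y
  have hcont : ∀ φ : (V → ℝ) →ₗ[ℝ] ℝ, Continuous φ := fun φ => φ.continuous_of_finiteDimensional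
  obtain ⟨a, ha, b, hb, hab⟩ := Sion.exists_isSaddlePointOn (f := fun x y => B x y)
    ⟨_, single_mem_stdSimplex ℝ (Classical.arbitrary V)⟩ (convex_stdSimplex ℝ V)
    (isCompact_stdSimplex ℝ V)
    (fun y _ => (hcont (B.flip y)).lowerSemicontinuous.lowerSemicontinuousOn _)
    (fun y _ => ((B.flip y).convexOn (convex_stdSimplex ℝ V)).quasiconvexOn)
    (convex_stdSimplex ℝ V) ⟨_, single_mem_stdSimplex ℝ (Classical.arbitrary V)⟩
    (isCompact_stdSimplex ℝ V)
    (fun x _ => (hcont (B x)).upperSemicontinuous.upperSemicontinuousOn _)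
    (fun x _ => ((B x).concaveOn (convex_stdSimplex ℝ V)).quasiconcaveOn)
  -- By skew-symmetry `B a a = 0`, so the saddle point gives `0 ≤ B x b` for every `x`.
  have haa : B a a = 0 := by
    have h : B a a = -B a a := calc
      B a a = ∑ i, ∑ j, a j * g j i * a i := by rw [hB, sum_comm]
      _ = -B a a := by
        simp only [hB, ← sum_neg_distrib]
        exact sum_congr rfl fun i _ => sum_congr rfl fun j _ => by rw [hg]; ring
    linarith
  refine ⟨b, hb, fun v => ?_⟩
  have := hab _ (single_mem_stdSimplex ℝ v) a ha
  simp only [haa] at this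
  rwa [Matrix.toBilin'_apply', single_one_dotProduct] at this

theorem exists_le_of_sum_mul_le {V : Type*} [Fintype V] {p f g : V → ℝ} (hp : p ∈ stdSimplex ℝ V)
    (h : ∑ v, p v * f v ≤ ∑ v, p v * g v) : ∃ v, f v ≤ g v := by
  by_contra! hlt
  obtain ⟨v₀, -, hv₀⟩ := exists_lt_of_sum_lt (by simp [hp.2] : ∑ _ : V, (0 : ℝ) < ∑ v, p v)
  exact (sum_lt_sum (fun v _ => mul_le_mul_of_nonneg_left (hlt v).le (hp.1 v))
    ⟨v₀, mem_univ _, mul_lt_mul_of_pos_left (hlt v₀) hv₀⟩).not_ge h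

section ArcMass

variable {V : Type*} {adj : V → V → Prop} [DecidableRel adj] {p : V → ℝ}

variable (adj p) in
def arcMass (A B : Finset V) : ℝ :=
  ∑ a ∈ A, ∑ b ∈ B, if adj a b then p a * p b else 0

lemma arcMass_mono_left (hp : ∀ v, 0 ≤ p v) {A A' : Finset V} (h : A ⊆ A') (B : Finset V) :
    arcMass adj p A B ≤ arcMass adj p A' B :=
  sum_le_sum_of_subset_of_nonneg h fun a _ _ => sum_nonneg fun b _ => by
    split_ifs
    exacts [mul_nonneg (hp a) (hp b), le_rfl]

lemma arcMass_le_mul (hp : ∀ v, 0 ≤ p v) (A B : Finset V) :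
    arcMass adj p A B ≤ (∑ a ∈ A, p a) * ∑ b ∈ B, p b := by
  rw [sum_mul_sum]
  refine sum_le_sum fun a _ => sum_le_sum fun b _ => ?_
  split_ifs
  exacts [le_rfl, mul_nonneg (hp a) (hp b)]

variable [Fintype V] [DecidableEq V]

lemma arcMass_compl_le (hp : ∀ v, 0 ≤ p v)
    (hdom : ∀ v, ∑ u with adj u v, p u ≤ ∑ u with adj v u, p u) (A : Finset V) :
    arcMass adj p Aᶜ A ≤ arcMass adj p A Aᶜ := by
  have hout : arcMass adj p A A + arcMass adj p A Aᶜ = ∑ a ∈ A, p a * ∑ u with adj a u, p u := by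
    simp only [arcMass, ← sum_add_distrib, sum_add_sum_compl, mul_sum, sum_filter, mul_ite,
      mul_zero]
  have hin : arcMass adj p A A + arcMass adj p Aᶜ A = ∑ a ∈ A, p a * ∑ u with adj u a, p u := by
    rw [arcMass, arcMass, sum_add_sum_compl, sum_comm]
    simp only [mul_sum, sum_filter, mul_ite, mul_zero, mul_comm]
  have : ∑ a ∈ A, p a * ∑ u with adj u a, p u ≤ ∑ a ∈ A, p a * ∑ u with adj a u, p u :=
    sum_le_sum fun a _ => mul_le_mul_of_nonneg_left (hdom a) (hp a)
  linarith

end ArcMass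

lemma not_adj_of_adj {V : Type*} {adj : V → V → Prop} (hirr : ∀ v, ¬ adj v v)
    (htour : ∀ u v : V, u ≠ v → (adj u v ↔ ¬ adj v u)) {u v : V} (h : adj u v) : ¬ adj v u := by
  rcases eq_or_ne u v with rfl | huv
  · exact hirr u
  · exact (htour u v huv).1 h

section Tournament

variable {V : Type*} [Fintype V] {adj : V → V → Prop} [DecidableRel adj]

variable (adj) in
theorem exists_mem_stdSimplex_sum_filter_adj_le [Nonempty V] :
    ∃ p ∈ stdSimplex ℝ V, ∀ v, ∑ u with adj u v, p u ≤ ∑ u with adj v u, p u := by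
  obtain ⟨p, hp, h⟩ := exists_mem_stdSimplex_forall_sum_mul_nonneg
    (fun v u => (if adj v u then 1 else 0) - if adj u v then 1 else 0) fun _ _ => by ring
  refine ⟨p, hp, fun v => ?_⟩
  have := h v
  simp only [sub_mul, sum_sub_distrib, ite_mul, one_mul, zero_mul, ← sum_filter] at this
  linarith

variable {p : V → ℝ}

lemma two_mul_sum_le_one_of_forall_adj (hirr : ∀ v, ¬ adj v v)
    (htour : ∀ u v : V, u ≠ v → (adj u v ↔ ¬ adj v u)) (hp : p ∈ stdSimplex ℝ V)
    (hdom : ∀ v, ∑ u with adj u v, p u ≤ ∑ u with adj v u, p u) {s : V} {S : Finset V}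
    (hS : ∀ x ∈ S, adj x s) : 2 * ∑ x ∈ S, p x ≤ 1 := by
  classical
  have hin : ∑ x ∈ S, p x ≤ ∑ u with adj u s, p u :=
    sum_le_sum_of_subset_of_nonneg (fun x hx => mem_filter.2 ⟨mem_univ x, hS x hx⟩)
      fun x _ _ => hp.1 x
  have hdisj : ∑ u with adj u s, p u + ∑ u with adj s u, p u ≤ 1 := by
    rw [← sum_union (disjoint_filter.2 fun u _ => not_adj_of_adj hirr htour), ← hp.2]
    exact sum_le_sum_of_subset_of_nonneg (subset_univ _) fun x _ _ => hp.1 x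
  linarith [hdom s]

variable [DecidableEq V]

theorem two_mul_sum_le_sum_closedInNbhd (hirr : ∀ v, ¬ adj v v)
    (htour : ∀ u v : V, u ≠ v → (adj u v ↔ ¬ adj v u)) (hp : p ∈ stdSimplex ℝ V)
    (hdom : ∀ v, ∑ u with adj u v, p u ≤ ∑ u with adj v u, p u) {s : V} {S : Finset V}
    (hS : ∀ x ∈ S, adj x s) :
    2 * ∑ x ∈ S, p x ≤ ∑ v with ∃ y ∈ S, y = v ∨ adj v y, p v := by
  set D : Finset V := {v | ∃ y ∈ S, y = v ∨ adj v y}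
  have hSD : S ⊆ D := fun x hx => mem_filter.2 ⟨mem_univ x, x, hx, Or.inl rfl⟩
  have hDc : ∀ r ∈ Dᶜ, ∀ x ∈ S, x ≠ r ∧ ¬ adj r x := fun r hr x hx => by
    simp only [D, mem_compl, mem_filter, mem_univ, true_and, not_exists, not_and, not_or] at hr
    exact hr x hx
  have hsplit : ∑ v ∈ D, p v = ∑ x ∈ S, p x + ∑ v ∈ D \ S, p v := by
    rw [add_comm, sum_sdiff hSD]
  rcases (sum_nonneg fun r _ => hp.1 r : 0 ≤ ∑ r ∈ Dᶜ, p r).eq_or_lt with hρ | hρ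
  · have hD : ∑ v ∈ D, p v = 1 := by rw [← hp.2, ← sum_add_sum_compl D, ← hρ, add_zero]
    linarith [two_mul_sum_le_one_of_forall_adj hirr htour hp hdom hS]
  · have key : (∑ x ∈ S, p x) * ∑ r ∈ Dᶜ, p r ≤ (∑ v ∈ D \ S, p v) * ∑ r ∈ Dᶜ, p r := calc
      (∑ x ∈ S, p x) * ∑ r ∈ Dᶜ, p r = arcMass adj p S Dᶜ := by
        rw [arcMass, sum_mul_sum]
        refine sum_congr rfl fun x hx => sum_congr rfl fun r hr => (if_pos ?_).symm
        exact (htour x r (hDc r hr x hx).1).2 (hDc r hr x hx).2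
      _ ≤ arcMass adj p D Dᶜ := arcMass_mono_left hp.1 hSD _
      _ ≤ arcMass adj p Dᶜ D := by simpa using arcMass_compl_le hp.1 hdom Dᶜ
      _ = arcMass adj p Dᶜ (D \ S) := by
        refine sum_congr rfl fun r hr => (sum_subset sdiff_subset fun y _ hy => ?_).symm
        rw [if_neg (hDc r hr y (by simpa [mem_sdiff, ‹y ∈ D›] using hy)).2]
      _ ≤ (∑ v ∈ D \ S, p v) * ∑ r ∈ Dᶜ, p r := by
        rw [mul_comm]; exact arcMass_le_mul hp.1 _ _
    linarith [le_of_mul_le_mul_right key hρ]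

end Tournament

section WeightedTournament

variable {V : Type*} [Fintype V] {adj : V → V → Prop} [DecidableRel adj] {w : V → V → ℝ}

lemma alphaW_eq_sum (hw_arc : ∀ a b, ¬ adj a b → w a b = 0) (v : V) :
    alphaW adj w v = ∑ u, w v u := by
  rw [alphaW, firstNbhd, sum_filter]
  exact sum_congr rfl fun u _ => by split_ifs with h; rfl; exact (hw_arc v u h).symm

variable [DecidableEq V]

variable (adj) in
def closedFirstNbhd (v : V) : Finset V := insert v (firstNbhd adj v)

lemma mem_closedFirstNbhd {v y : V} : y ∈ closedFirstNbhd adj v ↔ y = v ∨ adj v y := by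
  simp [closedFirstNbhd, firstNbhd]

variable (adj) in
lemma closedFirstNbhd_nonempty (v : V) : (closedFirstNbhd adj v).Nonempty := insert_nonempty _ _

lemma sup'_closedFirstNbhd_sub_le_betaS (hw_nonneg : ∀ a b, 0 ≤ w a b)
    (hw_arc : ∀ a b, ¬ adj a b → w a b = 0) (v s : V) :
    (closedFirstNbhd adj v).sup' (closedFirstNbhd_nonempty adj v) (w · s) - w v s ≤
      betaS adj w v s := by
  unfold betaS
  rw [sub_le_iff_le_add]
  refine sup'_le _ _ fun y hy => ?_
  set T : Finset ℝ := ({u | adj v u ∧ adj u s} : Finset V).image fun u => w u s - w v s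
  have hβ := le_max' (insert 0 T) 0 (mem_insert_self 0 T)
  rcases mem_closedFirstNbhd.1 hy with rfl | hvy
  · linarith
  by_cases hys : adj y s
  · have hyT : w y s - w v s ∈ T := mem_image_of_mem _ (by simp [hvy, hys])
    have := le_max' (insert 0 T) _ (mem_insert_of_mem hyT)
    linarith
  · linarith [hw_arc y s hys, hw_nonneg v s]

theorem two_mul_sum_mul_le_sum_mul_sup'_closedFirstNbhd (hirr : ∀ v, ¬ adj v v)
    (htour : ∀ u v : V, u ≠ v → (adj u v ↔ ¬ adj v u)) {p : V → ℝ} (hp : p ∈ stdSimplex ℝ V)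
    (hdom : ∀ v, ∑ u with adj u v, p u ≤ ∑ u with adj v u, p u)
    (hw_nonneg : ∀ a b, 0 ≤ w a b) (hw_arc : ∀ a b, ¬ adj a b → w a b = 0) (s : V) :
    2 * ∑ x, p x * w x s ≤
      ∑ v, p v * (closedFirstNbhd adj v).sup' (closedFirstNbhd_nonempty adj v) (w · s) := by
  rw [mul_sum]
  simp only [← mul_assoc]
  refine sum_mul_le_sum_mul_of_sum_superlevel_le (fun x => hw_nonneg x s)
    (fun v => (hw_nonneg v s).trans (le_sup' (w · s) (mem_closedFirstNbhd.2 (Or.inl rfl))))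
    fun t ht => ?_
  rw [← mul_sum]
  convert two_mul_sum_le_sum_closedInNbhd hirr htour hp hdom
    (S := {x | t < w x s}) (s := s) fun x hx => ?_ using 2
  · ext v
    simp only [mem_filter, mem_univ, true_and, lt_sup'_iff, mem_closedFirstNbhd]
    exact exists_congr fun y => and_comm
  · by_contra h
    exact ht.not_gt (by simpa [hw_arc x s h] using hx)

end WeightedTournament

theorem arc_weighted_tournament_has_seymour_vertex_general
    {V : Type*} [Fintype V] [Nonempty V]
    (adj : V → V → Prop) [DecidableRel adj]
    (hirr : ∀ v, ¬ adj v v)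
    (htour : ∀ u v : V, u ≠ v → (adj u v ↔ ¬ adj v u))
    (w : V → V → ℝ)
    (hw_nonneg : ∀ a b, 0 ≤ w a b)
    (hw_arc : ∀ a b, ¬ adj a b → w a b = 0) :
    ∃ v : V, 0 ≤ deltaW adj w v := by
  classical
  obtain ⟨p, hp, hdom⟩ := exists_mem_stdSimplex_sum_filter_adj_le adj
  set M : V → V → ℝ := fun v s =>
    (closedFirstNbhd adj v).sup' (closedFirstNbhd_nonempty adj v) (w · s)
  have hsum : ∑ v, p v * (2 * ∑ s, w v s) ≤ ∑ v, p v * ∑ s, M v s := calc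
    ∑ v, p v * (2 * ∑ s, w v s) = ∑ s, 2 * ∑ v, p v * w v s := by
      simp only [mul_sum]
      rw [sum_comm]
      exact sum_congr rfl fun _ _ => sum_congr rfl fun _ _ => by ring
    _ ≤ ∑ s, ∑ v, p v * M v s := sum_le_sum fun s _ =>
      two_mul_sum_mul_le_sum_mul_sup'_closedFirstNbhd hirr htour hp hdom hw_nonneg hw_arc s
    _ = ∑ v, p v * ∑ s, M v s := by simp only [mul_sum]; rw [sum_comm]
  obtain ⟨v, hv⟩ := exists_le_of_sum_mul_le hp hsum
  have hβ := sum_le_sum fun s (_ : s ∈ univ) =>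
    sup'_closedFirstNbhd_sub_le_betaS hw_nonneg hw_arc v s
  rw [sum_sub_distrib] at hβ
  refine ⟨v, ?_⟩
  rw [deltaW, betaW, alphaW_eq_sum hw_arc]
  linarith

/-- **Every arc-weighted tournament contains a Seymour vertex.**
A tournament is an irreflexive digraph in which, for every pair of distinct vertices,
exactly one of the two possible arcs is present.  Given any nonnegative arc-weighting
(with weight `0` on non-arcs), there is a vertex `v` with `δ_v = β_v − α_v ≥ 0`. -/
theorem arc_weighted_tournament_has_seymour_vertex
    {V : Type*} [Fintype V] [DecidableEq V] [Nonempty V]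
    (adj : V → V → Prop) [DecidableRel adj]
    (hirr : ∀ v, ¬ adj v v)
    (htour : ∀ u v : V, u ≠ v → (adj u v ↔ ¬ adj v u))
    (w : V → V → ℝ)
    (hw_nonneg : ∀ a b, 0 ≤ w a b)
    (hw_arc : ∀ a b, ¬ adj a b → w a b = 0) :
    ∃ v : V, 0 ≤ deltaW adj w v :=
  arc_weighted_tournament_has_seymour_vertex_general adj hirr htour w hw_nonneg hw_arc
end

section
/- Every tournament contains a Seymour vertex, i.e., there exists a vertex v with |N1+(v)| ≤ |N2+(v)|. (Fisher's theorem, reproved in this paper as a consequence of the arc-weighted tournament theorem.) -/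
/-!
The last vertex `f` of a median order (an ordering of the vertices maximising the number of
forward arcs) is a Seymour vertex (Havet–Thomassé). Every interval of a median order is again
one, and its last vertex has at most as many out-neighbours as in-neighbours in it, since moving
it to the front must not gain forward arcs. If every in-neighbour of `f` lies in `N2+(f)`, this
already gives the bound. Otherwise cut the order at the first in-neighbour `b ∉ N2+(f)`: then
`N1+(f) ⊆ N1+(b)`, so the vertices before `b` are handled by the same degree count for `b`, and
those after `b` by induction on the length.
-/

open Finset

section MedianOrder

variable {V : Type*} (adj : V → V → Prop) [DecidableRel adj]

def forwardArcs : List V → ℕ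
  | [] => 0
  | a :: l => l.countP (adj a ·) + forwardArcs l

def crossArcs (l m : List V) : ℕ :=
  (l.map fun a => m.countP (adj a ·)).sum

theorem forwardArcs_append (l m : List V) :
    forwardArcs adj (l ++ m) = forwardArcs adj l + forwardArcs adj m + crossArcs adj l m := by
  induction l with
  | nil => simp [forwardArcs, crossArcs]
  | cons a l ih =>
    simp only [List.cons_append, forwardArcs, List.countP_append, ih, crossArcs, List.map_cons,
      List.sum_cons]
    ring

theorem crossArcs_perm {l l' m m' : List V} (hl : l.Perm l') (hm : m.Perm m') :
    crossArcs adj l m = crossArcs adj l' m' := by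
  rw [crossArcs, (hl.map _).sum_eq, crossArcs]
  exact congrArg _ (List.map_congr_left fun a _ => hm.countP_eq _)

theorem crossArcs_singleton (l : List V) (b : V) :
    crossArcs adj l [b] = l.countP (adj · b) := by
  induction l with
  | nil => rfl
  | cons a l ih =>
    simp only [crossArcs, List.map_cons, List.sum_cons, List.countP_cons, List.countP_nil,
      decide_eq_true_eq, zero_add] at ih ⊢
    omega

def IsMedianOrder (l : List V) : Prop :=
  ∀ l', l'.Perm l → forwardArcs adj l' ≤ forwardArcs adj l

theorem exists_perm_isMedianOrder (l : List V) : ∃ m, m.Perm l ∧ IsMedianOrder adj m := by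
  classical
  obtain ⟨m, hm, hmax⟩ := l.permutations.toFinset.exists_max_image (forwardArcs adj)
    ⟨l, by simp⟩
  simp only [List.mem_toFinset, List.mem_permutations] at hm hmax
  exact ⟨m, hm, fun l' hl' => hmax l' (hl'.trans hm)⟩

variable {adj}

theorem IsMedianOrder.of_infix {l m : List V} (h : IsMedianOrder adj l) (hm : m <:+: l) :
    IsMedianOrder adj m := by
  obtain ⟨s, t, rfl⟩ := hm
  intro m' hm'
  have key : ∀ k : List V, forwardArcs adj (s ++ k ++ t) = forwardArcs adj s + forwardArcs adj k
      + forwardArcs adj t + crossArcs adj s (k ++ t) + crossArcs adj k t := by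
    intro k
    rw [List.append_assoc, forwardArcs_append, forwardArcs_append]
    ring
  have hle := h (s ++ m' ++ t) ((hm'.append_left s).append_right t)
  rw [key, key, crossArcs_perm adj (List.Perm.refl s) (hm'.append_right t),
    crossArcs_perm adj hm' (List.Perm.refl t)] at hle
  omega

theorem IsMedianOrder.countP_adj_last_le {l : List V} {f : V} (h : IsMedianOrder adj (l ++ [f])) :
    l.countP (adj f ·) ≤ l.countP (adj · f) := by
  have hle := h (f :: l) (List.perm_append_singleton f l).symm
  rw [forwardArcs_append, crossArcs_singleton] at hle
  simp only [forwardArcs, List.countP_nil] at hle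
  omega

end MedianOrder

section Tournament

variable {V : Type*} [Fintype V] [DecidableEq V] {adj : V → V → Prop} [DecidableRel adj]

theorem adj_of_not_mem_secondNbhd (hirr : ∀ v, ¬ adj v v)
    (htour : ∀ u v : V, u ≠ v → (adj u v ↔ ¬ adj v u)) {f b x : V} (hbf : adj b f)
    (hb : b ∉ secondNbhd adj f) (hfx : adj f x) : adj b x := by
  have hne : b ≠ f := by rintro rfl; exact hirr b hbf
  have hfb : ¬ adj f b := (htour b f hne).1 hbf
  by_contra hbx
  have hxb : adj x b := (htour x b (by rintro rfl; exact hfb hfx)).2 hbx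
  exact hb (by simpa [secondNbhd] using ⟨hne, hfb, x, hfx, hxb⟩)

theorem countP_adj_le_countP_mem_secondNbhd_of_prefix (hirr : ∀ v, ¬ adj v v)
    (htour : ∀ u v : V, u ≠ v → (adj u v ↔ ¬ adj v u)) {P : List V} {b f : V}
    (hmed : IsMedianOrder adj (P ++ [b])) (hbf : adj b f) (hb : b ∉ secondNbhd adj f)
    (hP : ∀ u ∈ P, adj u f → u ∈ secondNbhd adj f) :
    P.countP (adj f ·) ≤ P.countP (· ∈ secondNbhd adj f) := by
  have hb_ne : b ≠ f := by rintro rfl; exact hirr b hbf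
  calc P.countP (adj f ·) ≤ P.countP (adj b ·) := List.countP_mono_left fun x _ hfx => by
          simpa using adj_of_not_mem_secondNbhd hirr htour hbf hb (by simpa using hfx)
    _ ≤ P.countP (adj · b) := hmed.countP_adj_last_le
    _ ≤ P.countP (· ∈ secondNbhd adj f) := List.countP_mono_left fun u hu hub => by
          simp only [decide_eq_true_eq] at hub ⊢
          have hbu : ¬ adj b u := (htour u b (by rintro rfl; exact hirr u hub)).1 hub
          have hfu : ¬ adj f u := fun hfu => hbu (adj_of_not_mem_secondNbhd hirr htour hbf hb hfu)
          have huf : u ≠ f := by rintro rfl; exact (htour b u hb_ne).1 hbf hub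
          exact hP u hu ((htour u f huf).2 hfu)

theorem countP_adj_le_countP_mem_secondNbhd (hirr : ∀ v, ¬ adj v v)
    (htour : ∀ u v : V, u ≠ v → (adj u v ↔ ¬ adj v u)) (l : List V) (f : V)
    (hmed : IsMedianOrder adj (l ++ [f])) :
    l.countP (adj f ·) ≤ l.countP (· ∈ secondNbhd adj f) := by
  cases hfind : l.find? (fun u => adj u f ∧ u ∉ secondNbhd adj f) with
  | none =>
    have hin : ∀ u ∈ l, adj u f → u ∈ secondNbhd adj f := by
      simpa using List.find?_eq_none.1 hfind
    calc l.countP (adj f ·) ≤ l.countP (adj · f) := hmed.countP_adj_last_le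
      _ ≤ l.countP (· ∈ secondNbhd adj f) := List.countP_mono_left (by simpa using hin)
  | some b =>
    obtain ⟨hb, P, S, rfl, hP⟩ := List.find?_eq_some_iff_append.1 hfind
    simp only [decide_eq_true_eq, Bool.not_eq_true', decide_eq_false_iff_not, not_and,
      not_not] at hb hP
    have hfb : ¬ adj f b := (htour b f (by rintro rfl; exact hirr b hb.1)).1 hb.1
    have hmedP : IsMedianOrder adj (P ++ [b]) := hmed.of_infix ⟨[], S ++ [f], by simp⟩
    have hmedS : IsMedianOrder adj (S ++ [f]) := hmed.of_infix ⟨P ++ [b], [], by simp⟩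
    have hboundP := countP_adj_le_countP_mem_secondNbhd_of_prefix hirr htour hmedP hb.1 hb.2 hP
    have hboundS := countP_adj_le_countP_mem_secondNbhd hirr htour S f hmedS
    simp only [List.countP_append, List.countP_cons, hfb, decide_false,
      Bool.false_eq_true, if_false]
    split_ifs <;> omega
termination_by l.length
decreasing_by subst_vars; simp only [List.length_append, List.length_cons]; omega

theorem card_eq_countP_mem {l : List V} (hl : l.Perm (univ : Finset V).toList) (s : Finset V) :
    s.card = l.countP (· ∈ s) := by
  rw [hl.countP_eq, ← (nodup_toList univ).card_eq_countP, toList_toFinset, filter_mem_eq_inter,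
    univ_inter]

end Tournament

/-- **Fisher's theorem.** Every tournament contains a Seymour vertex, i.e., a vertex whose
second out-neighborhood is at least as large as its first out-neighborhood. -/
theorem tournament_has_seymour_vertex
    {V : Type*} [Fintype V] [DecidableEq V] [Nonempty V]
    (adj : V → V → Prop) [DecidableRel adj]
    (hirr : ∀ v, ¬ adj v v)
    (htour : ∀ u v : V, u ≠ v → (adj u v ↔ ¬ adj v u)) :
    ∃ v : V, (firstNbhd adj v).card ≤ (secondNbhd adj v).card := by
  obtain ⟨l, hperm, hmed⟩ := exists_perm_isMedianOrder adj (univ : Finset V).toList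
  obtain ⟨l, f, rfl⟩ : ∃ l₀ f, l = l₀ ++ [f] := by
    rcases l.eq_nil_or_concat with rfl | ⟨l₀, f, rfl⟩
    · exact absurd (by simpa using hperm.symm) univ_nonempty.ne_empty
    · exact ⟨l₀, f, List.concat_eq_append⟩
  refine ⟨f, ?_⟩
  rw [card_eq_countP_mem hperm, card_eq_countP_mem hperm]
  have := countP_adj_le_countP_mem_secondNbhd hirr htour l f hmed
  simp only [List.countP_append, firstNbhd, mem_filter, mem_univ, true_and] at this ⊢
  simp only [List.countP_singleton, hirr f, decide_false, Bool.false_eq_true, if_false]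
  omega
end

section
/- For every digraph D, exactly one of the following holds: (1) there exists a nonnegative vertex-weighting η : V → ℝ with Σ_{v ∈ V} η(v) = 1 such that η(N1+(v)) ≤ η(N2+(v)) for every vertex v (i.e., every vertex of D is weakly expanding); (2) there exists a nonnegative vertex-weighting η : V → ℝ such that η(N1−(v)) > η(N2−(v)) for every vertex v (i.e., every vertex of the reverse digraph of D is strongly contracting). -/
open Finset

/-! Write `M` for the `V × V` matrix with `M v u = [u ∈ N₁⁺(v)] - [u ∈ N₂⁺(v)]`. Alternative (1)
says `M x ≤ 0` for some `x` in the standard simplex `Δ`; since the neighbourhoods of the reverse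
digraph are the transposed ones, alternative (2) says `yᵀ M > 0` for some `y ≥ 0`. This is Ville's
theorem of the alternative for `M`. Both cannot hold, because `yᵀ M x` would be both `≤ 0` and
`> 0`. If (1) fails, the compact convex set `M(Δ)` misses the closed cone of nonpositive vectors,
and a separating functional, which must be nonnegative on that cone, gives `y`. -/

open Matrix

lemma LinearMap.nonneg_of_lt_of_smul_mem {E : Type*} [AddCommGroup E] [Module ℝ E]
    (f : E →ₗ[ℝ] ℝ) {C : Set E} (hC : ∀ z ∈ C, ∀ t : ℝ, 0 ≤ t → t • z ∈ C) {s : ℝ}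
    (hs : ∀ z ∈ C, s < f z) {z : E} (hz : z ∈ C) : 0 ≤ f z := by
  by_contra! hneg
  have hs0 : s < 0 := by simpa using hs _ (hC z hz 0 le_rfl)
  have := hs _ (hC z hz (s / f z) (div_nonneg_of_nonpos hs0.le hneg.le))
  rw [map_smul, smul_eq_mul, div_mul_cancel₀ _ hneg.ne] at this
  exact this.false

lemma LinearMap.apply_eq_sum_mul_single {ι : Type*} [Fintype ι] [DecidableEq ι]
    (f : (ι → ℝ) →ₗ[ℝ] ℝ) (x : ι → ℝ) : f x = ∑ i, x i * f (Pi.single i 1) := by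
  conv_lhs => rw [← Finset.univ_sum_single x]
  simp only [map_sum]
  refine Finset.sum_congr rfl fun i _ => ?_
  rw [← smul_eq_mul, ← map_smul, ← Pi.single_smul, smul_eq_mul, mul_one]

namespace Matrix

variable {m n : Type*} [Fintype m] [Fintype n] (M : Matrix m n ℝ)

theorem not_exists_stdSimplex_mulVec_nonpos_of_vecMul_pos {y : m → ℝ} (hy : ∀ i, 0 ≤ y i)
    (hyM : ∀ j, 0 < (y ᵥ* M) j) : ¬ ∃ x ∈ stdSimplex ℝ n, ∀ i, (M *ᵥ x) i ≤ 0 := by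
  rintro ⟨x, ⟨hx, hx1⟩, hMx⟩
  have hle : y ⬝ᵥ (M *ᵥ x) ≤ 0 :=
    Finset.sum_nonpos fun i _ => mul_nonpos_of_nonneg_of_nonpos (hy i) (hMx i)
  obtain ⟨j, -, hj⟩ := (Finset.sum_pos_iff_of_nonneg fun j _ => hx j).1 (hx1 ▸ one_pos)
  have hpos : 0 < (y ᵥ* M) ⬝ᵥ x :=
    (Finset.sum_pos_iff_of_nonneg fun j _ => mul_nonneg (hyM j).le (hx j)).2
      ⟨j, Finset.mem_univ j, mul_pos (hyM j) hj⟩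
  rw [dotProduct_mulVec] at hle
  exact hle.not_gt hpos

theorem exists_nonneg_vecMul_pos_of_not_exists_stdSimplex
    (h : ¬ ∃ x ∈ stdSimplex ℝ n, ∀ i, (M *ᵥ x) i ≤ 0) :
    ∃ y : m → ℝ, (∀ i, 0 ≤ y i) ∧ ∀ j, 0 < (y ᵥ* M) j := by
  classical
  have hdisj : Disjoint (M.mulVecLin '' stdSimplex ℝ n) (Set.Iic 0) := by
    refine Set.disjoint_left.2 ?_
    rintro _ ⟨x, hx, rfl⟩ hle
    exact h ⟨x, hx, hle⟩
  obtain ⟨f, r, s, hA, hrs, hB⟩ := geometric_hahn_banach_compact_closed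
    ((convex_stdSimplex ℝ n).linear_image M.mulVecLin)
    ((isCompact_stdSimplex ℝ n).image M.mulVecLin.continuous_of_finiteDimensional)
    (convex_Iic 0) isClosed_Iic hdisj
  have hf : ∀ z ≤ 0, 0 ≤ f z := fun z hz =>
    (f : (m → ℝ) →ₗ[ℝ] ℝ).nonneg_of_lt_of_smul_mem (C := Set.Iic 0)
      (fun _ hz _ ht => Set.mem_Iic.2 (smul_nonpos_of_nonneg_of_nonpos ht hz)) hB hz
  refine ⟨fun i => -f (Pi.single i 1), fun i => ?_, fun j => ?_⟩
  · simpa using hf (-Pi.single i 1) (by simp [Pi.single_nonneg])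
  · have hcol : f (M.col j) < 0 := calc
      f (M.col j) < r := hA _ ⟨_, single_mem_stdSimplex ℝ j, mulVec_single_one M j⟩
      _ < s := hrs
      _ < 0 := by simpa using hB 0 Set.self_mem_Iic
    rw [← ContinuousLinearMap.coe_coe, LinearMap.apply_eq_sum_mul_single] at hcol
    simpa [vecMul, dotProduct, mul_comm] using hcol

theorem xor_exists_stdSimplex_mulVec_nonpos_exists_vecMul_pos :
    Xor' (∃ x ∈ stdSimplex ℝ n, ∀ i, (M *ᵥ x) i ≤ 0)
      (∃ y : m → ℝ, (∀ i, 0 ≤ y i) ∧ ∀ j, 0 < (y ᵥ* M) j) := by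
  by_cases h : ∃ x ∈ stdSimplex ℝ n, ∀ i, (M *ᵥ x) i ≤ 0
  · exact Or.inl ⟨h, fun ⟨_, hy, hyM⟩ =>
      M.not_exists_stdSimplex_mulVec_nonpos_of_vecMul_pos hy hyM h⟩
  · exact Or.inr ⟨M.exists_nonneg_vecMul_pos_of_not_exists_stdSimplex h, h⟩

end Matrix

section Digraph

variable {V : Type*} [Fintype V] [DecidableEq V] (adj : V → V → Prop) [DecidableRel adj]

def nbhdMatrix : Matrix V V ℝ :=
  Matrix.of fun v u =>
    (if u ∈ firstNbhd adj v then 1 else 0) - (if u ∈ secondNbhd adj v then 1 else 0)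

lemma nbhdMatrix_swap : nbhdMatrix (fun a b => adj b a) = (nbhdMatrix adj)ᵀ := by
  ext v u
  simp [nbhdMatrix, firstNbhd, secondNbhd, ne_comm, and_comm]

lemma nbhdMatrix_mulVec_apply (η : V → ℝ) (v : V) :
    (nbhdMatrix adj *ᵥ η) v = ∑ u ∈ firstNbhd adj v, η u - ∑ u ∈ secondNbhd adj v, η u := by
  simp [nbhdMatrix, mulVec, dotProduct, sub_mul, sum_sub_distrib, ite_mul, sum_ite_mem]

lemma vecMul_nbhdMatrix_apply (η : V → ℝ) (v : V) :
    (η ᵥ* nbhdMatrix adj) v = ∑ u ∈ firstNbhd (fun a b => adj b a) v, η u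
      - ∑ u ∈ secondNbhd (fun a b => adj b a) v, η u := by
  rw [← mulVec_transpose, ← nbhdMatrix_swap, nbhdMatrix_mulVec_apply]

end Digraph

theorem expanding_or_contracting_weighting_general
    {V : Type*} [Fintype V] [DecidableEq V]
    (adj : V → V → Prop) [DecidableRel adj] :
    Xor'
      (∃ η : V → ℝ, (∀ v, 0 ≤ η v) ∧ (∑ v, η v) = 1 ∧
        ∀ v, ∑ u ∈ firstNbhd adj v, η u ≤ ∑ u ∈ secondNbhd adj v, η u)
      (∃ η : V → ℝ, (∀ v, 0 ≤ η v) ∧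
        ∀ v, ∑ u ∈ secondNbhd (fun a b => adj b a) v, η u <
          ∑ u ∈ firstNbhd (fun a b => adj b a) v, η u) := by
  simpa only [stdSimplex, Set.mem_ofPred_eq, and_assoc, nbhdMatrix_mulVec_apply,
    vecMul_nbhdMatrix_apply, sub_nonpos, sub_pos] using
    (nbhdMatrix adj).xor_exists_stdSimplex_mulVec_nonpos_exists_vecMul_pos

/-- For every digraph `D`, exactly one of the following holds:
(1) there is a nonnegative vertex-weighting `η` summing to `1` under which every vertex of
`D` is weakly expanding (`η(N1+(v)) ≤ η(N2+(v))` for all `v`); or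
(2) there is a nonnegative vertex-weighting `η` under which every vertex of the reverse
digraph of `D` is strongly contracting (`η(N1−(v)) > η(N2−(v))` for all `v`). -/
theorem expanding_or_contracting_weighting
    {V : Type*} [Fintype V] [DecidableEq V]
    (adj : V → V → Prop) [DecidableRel adj]
    (hirr : ∀ v, ¬ adj v v)
    (hasym : ∀ u v, adj u v → ¬ adj v u) :
    Xor'
      (∃ η : V → ℝ, (∀ v, 0 ≤ η v) ∧ (∑ v, η v) = 1 ∧
        ∀ v, ∑ u ∈ firstNbhd adj v, η u ≤ ∑ u ∈ secondNbhd adj v, η u)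
      (∃ η : V → ℝ, (∀ v, 0 ≤ η v) ∧
        ∀ v, ∑ u ∈ secondNbhd (fun a b => adj b a) v, η u <
          ∑ u ∈ firstNbhd (fun a b => adj b a) v, η u) :=
  expanding_or_contracting_weighting_general adj
end

section
/- Let D be a digraph with a nonnegative vertex-weighting η such that every arc of D is contained in a directed triangle (for every arc u → v there exists x with v → x and x → u). Then D contains a Seymour vertex, i.e., there exists a vertex v with η(N1+(v)) ≤ η(N2+(v)). -/
/-!
Every in-neighbour of `v` is a second out-neighbour, since the arc `u → v` closes a triangle
`v → x → u`. So it suffices to find a vertex whose in-weight dominates its out-weight. Such a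
vertex exists because, counting each arc `v → u` with weight `η v * η u`, the `η`-weighted
averages of the out-weights and of the in-weights coincide.
-/

open Finset

section

variable {V : Type*} [Fintype V] (adj : V → V → Prop) [DecidableRel adj]

def inNbhd (v : V) : Finset V :=
  univ.filter (fun u => adj u v)

theorem sum_mul_sum_firstNbhd_eq_sum_mul_sum_inNbhd (η : V → ℝ) :
    ∑ v, η v * ∑ u ∈ firstNbhd adj v, η u = ∑ v, η v * ∑ u ∈ inNbhd adj v, η u := by
  simp only [firstNbhd, inNbhd, mul_sum, sum_filter]
  rw [sum_comm]
  exact sum_congr rfl fun _ _ => sum_congr rfl fun _ _ => by split_ifs <;> ring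

theorem exists_sum_firstNbhd_le_sum_inNbhd [Nonempty V] (η : V → ℝ) (hη : ∀ v, 0 ≤ η v) :
    ∃ v, ∑ u ∈ firstNbhd adj v, η u ≤ ∑ u ∈ inNbhd adj v, η u := by
  by_contra! hlt
  obtain ⟨v⟩ := ‹Nonempty V›
  have hout_pos : ∑ u ∈ firstNbhd adj v, (0 : ℝ) < ∑ u ∈ firstNbhd adj v, η u := by
    rw [sum_const_zero]
    exact (sum_nonneg fun u _ => hη u).trans_lt (hlt v)
  obtain ⟨w, -, hw⟩ := exists_lt_of_sum_lt hout_pos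
  have : ∑ v, η v * ∑ u ∈ inNbhd adj v, η u < ∑ v, η v * ∑ u ∈ firstNbhd adj v, η u :=
    sum_lt_sum (fun v _ => mul_le_mul_of_nonneg_left (hlt v).le (hη v))
      ⟨w, mem_univ w, mul_lt_mul_of_pos_left (hlt w) hw⟩
  exact this.ne' (sum_mul_sum_firstNbhd_eq_sum_mul_sum_inNbhd adj η)

theorem inNbhd_subset_secondNbhd [DecidableEq V] (hasym : ∀ u v, adj u v → ¬ adj v u)
    (htri : ∀ u v, adj u v → ∃ x, adj v x ∧ adj x u) (v : V) :
    inNbhd adj v ⊆ secondNbhd adj v := by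
  intro u hu
  simp only [inNbhd, mem_filter, mem_univ, true_and] at hu
  simp only [secondNbhd, mem_filter, mem_univ, true_and]
  refine ⟨?_, hasym u v hu, htri u v hu⟩
  rintro rfl
  exact hasym u u hu hu

end

theorem seymour_vertex_of_every_arc_in_triangle_general
    {V : Type*} [Fintype V] [DecidableEq V] [Nonempty V]
    (adj : V → V → Prop) [DecidableRel adj]
    (hasym : ∀ u v, adj u v → ¬ adj v u)
    (η : V → ℝ) (hη : ∀ v, 0 ≤ η v)
    (htri : ∀ u v, adj u v → ∃ x, adj v x ∧ adj x u) :
    ∃ v : V, ∑ u ∈ firstNbhd adj v, η u ≤ ∑ u ∈ secondNbhd adj v, η u := by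
  obtain ⟨v, hv⟩ := exists_sum_firstNbhd_le_sum_inNbhd adj η hη
  refine ⟨v, hv.trans ?_⟩
  exact sum_le_sum_of_subset_of_nonneg (inNbhd_subset_secondNbhd adj hasym htri v)
    fun u _ _ => hη u

/-- If every arc of a vertex-weighted digraph lies in a directed triangle, then the digraph
contains a Seymour vertex: a vertex `v` with `η(N1+(v)) ≤ η(N2+(v))`. -/
theorem seymour_vertex_of_every_arc_in_triangle
    {V : Type*} [Fintype V] [DecidableEq V] [Nonempty V]
    (adj : V → V → Prop) [DecidableRel adj]
    (hirr : ∀ v, ¬ adj v v)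
    (hasym : ∀ u v, adj u v → ¬ adj v u)
    (η : V → ℝ) (hη : ∀ v, 0 ≤ η v)
    (htri : ∀ u v, adj u v → ∃ x, adj v x ∧ adj x u) :
    ∃ v : V, ∑ u ∈ firstNbhd adj v, η u ≤ ∑ u ∈ secondNbhd adj v, η u :=
  seymour_vertex_of_every_arc_in_triangle_general adj hasym η hη htri
end

section
/- Let D be a digraph with arc-weighting w, and let u ≠ v be vertices such that for every vertex x, if x → u is an arc with w(xu) > 0 then x → v is an arc of D. Let D' with arc-weighting w' be the contraction of u to v. Then for every vertex y ∈ V ∖ {u}, the second neighborhood weight does not increase: β^{D'}_y ≤ β^D_y. -/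
open Finset

/-!
Every `w'`-witness `a` for `β'_y(s)` is also a `w`-witness for `β_y(s)`, except at `s = v`,
where `w'(a v) - w'(y v)` splits as `(w(a v) - w(y v)) + (w(a u) - w(y u))` and is bounded by
`β_y(v) + β_y(u)`; the second bound needs no arc `a → u`, since without one `w(a u) = 0`.
Summing over `s ≠ u`, the charge `β_y(u)` lost with `u` pays for the extra term at `v`.
-/

section SecondNeighborhoodWeight

variable {V : Type*} [Fintype V] (adj : V → V → Prop) [DecidableRel adj] (w : V → V → ℝ)

lemma betaS_nonneg (v s : V) : 0 ≤ betaS adj w v s :=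
  le_max' _ _ (mem_insert_self _ _)

lemma sub_le_betaS {v s a : V} (hva : adj v a) (has : adj a s) :
    w a s - w v s ≤ betaS adj w v s := by
  refine le_max' _ _ (mem_insert_of_mem (mem_image_of_mem (fun a => w a s - w v s) ?_))
  simp [hva, has]

lemma sub_le_betaS_of_adj (hw_nonneg : ∀ a b, 0 ≤ w a b)
    (hw_arc : ∀ a b, ¬ adj a b → w a b = 0) {v a : V} (hva : adj v a) (s : V) :
    w a s - w v s ≤ betaS adj w v s := by
  by_cases has : adj a s
  · exact sub_le_betaS adj w hva has
  · rw [hw_arc a s has]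
    linarith [hw_nonneg v s, betaS_nonneg adj w v s]

lemma betaS_le_of_forall {v s : V} {b : ℝ} (hb : 0 ≤ b)
    (h : ∀ a, adj v a → adj a s → w a s - w v s ≤ b) : betaS adj w v s ≤ b := by
  refine max'_le _ _ _ fun x hx => ?_
  rcases mem_insert.mp hx with rfl | hx
  · exact hb
  · obtain ⟨a, ha, rfl⟩ := mem_image.mp hx
    simp only [mem_filter, mem_univ, true_and] at ha
    exact h a ha.1 ha.2

end SecondNeighborhoodWeight

lemma sum_erase_add_ite_le {V : Type*} [Fintype V] [DecidableEq V] (f : V → ℝ)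
    (hf : ∀ s, 0 ≤ f s) (u v : V) :
    ∑ s ∈ univ.erase u, (f s + if s = v then f u else 0) ≤ ∑ s, f s := by
  rw [sum_add_distrib, sum_ite_eq', ← add_sum_erase univ f (mem_univ u), add_comm]
  gcongr
  split_ifs
  exacts [le_rfl, hf u]

def contractWeight {V : Type*} [DecidableEq V] (w : V → V → ℝ) (u v : V)
    (a b : {x : V // x ≠ u}) : ℝ :=
  if b.1 = v then w a.1 v + w a.1 u else w a.1 b.1

lemma betaS_contract_le {V : Type*} [Fintype V] [DecidableEq V] (adj : V → V → Prop)
    [DecidableRel adj] (w : V → V → ℝ) (hw_nonneg : ∀ a b, 0 ≤ w a b)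
    (hw_arc : ∀ a b, ¬ adj a b → w a b = 0)
    (u v : V) (y s : {x : V // x ≠ u}) :
    betaS (fun a b : {x : V // x ≠ u} => adj a.1 b.1) (contractWeight w u v) y s
      ≤ betaS adj w y s + if s.1 = v then betaS adj w y u else 0 := by
  have hβ := betaS_nonneg adj w y.1
  refine betaS_le_of_forall _ _ (add_nonneg (hβ _) (by split_ifs <;> simp [hβ]))
    fun a hya has => ?_
  by_cases hsv : s.1 = v
  · have hv := sub_le_betaS adj w hya (hsv ▸ has)
    have hu := sub_le_betaS_of_adj adj w hw_nonneg hw_arc hya u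
    simp only [contractWeight, hsv, if_true]
    linarith
  · have hs := sub_le_betaS adj w hya has
    simp only [contractWeight, hsv, if_false]
    linarith

theorem contraction_beta_le_general
    {V : Type*} [Fintype V] [DecidableEq V]
    (adj : V → V → Prop) [DecidableRel adj]
    (w : V → V → ℝ)
    (hw_nonneg : ∀ a b, 0 ≤ w a b)
    (hw_arc : ∀ a b, ¬ adj a b → w a b = 0)
    (u v : V) :
    ∀ y : {x : V // x ≠ u},
      betaW (fun a b : {x : V // x ≠ u} => adj a.1 b.1)
        (fun a b : {x : V // x ≠ u} =>
          if b.1 = v then w a.1 v + w a.1 u else w a.1 b.1) y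
      ≤ betaW adj w y.1 := by
  intro y
  change betaW _ (contractWeight w u v) y ≤ _
  calc _ ≤ ∑ s : {x : V // x ≠ u},
          (betaS adj w y s + if s.1 = v then betaS adj w y u else 0) :=
        sum_le_sum fun s _ => betaS_contract_le adj w hw_nonneg hw_arc u v y s
    _ = ∑ s ∈ univ.erase u, (betaS adj w y s + if s = v then betaS adj w y u else 0) :=
        (sum_subtype (p := (· ≠ u)) (univ.erase u) (by simp)
          fun s => betaS adj w y s + if s = v then betaS adj w y u else 0).symm
    _ ≤ betaW adj w y := sum_erase_add_ite_le _ (betaS_nonneg adj w y) u v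

/-- **Contraction does not increase second neighborhood weights.**
Let `u ≠ v` be vertices of an arc-weighted digraph such that every positive-weight arc
into `u` comes from an in-neighbor of `v`.  The contraction of `u` to `v` is the digraph
induced on `V ∖ {u}` whose weighting adds the weight of each arc `x → u` to `x → v`.
Then every remaining vertex `y` satisfies `β^{D'}_y ≤ β^D_y`. -/
theorem contraction_beta_le
    {V : Type*} [Fintype V] [DecidableEq V]
    (adj : V → V → Prop) [DecidableRel adj]
    (hirr : ∀ a, ¬ adj a a)
    (hasym : ∀ a b, adj a b → ¬ adj b a)
    (w : V → V → ℝ)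
    (hw_nonneg : ∀ a b, 0 ≤ w a b)
    (hw_arc : ∀ a b, ¬ adj a b → w a b = 0)
    (u v : V) (huv : u ≠ v)
    (hcontr : ∀ x, adj x u → 0 < w x u → adj x v) :
    ∀ y : {x : V // x ≠ u},
      betaW (fun a b : {x : V // x ≠ u} => adj a.1 b.1)
        (fun a b : {x : V // x ≠ u} =>
          if b.1 = v then w a.1 v + w a.1 u else w a.1 b.1) y
      ≤ betaW adj w y.1 :=
  contraction_beta_le_general adj w hw_nonneg hw_arc u v
end
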